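/- arXiv:1606.07508 — 5 statements merged into one kernel-verified Lean document; each statement's English description precedes it below -/
import Mathlib

section
/- Let α : ℝ≥0 → ℝ≥0 be positive definite, and let ρ₁ be a locally Lipschitz class-K∞ function and ρ₂ a class-L function such that α(r) ≥ ρ₁(r)·ρ₂(r) for all r ≥ 0. Let β(r,τ) denote the maximal solution of the scalar ODE dy/dτ = −ρ₁(y) with initial condition y(0) = r, so that β(r,0) = r. Then β is a class-KL function, and for every absolutely continuous function w : [t₀, t̃) → ℝ≥0 (with t̃ > t₀ ≥ 0) satisfying ẇ(t) ≤ −α(w(t)) for almost every t, one has w(t) ≤ β(w(t₀), ρ₂(w(t₀))·(t − t₀)) for all t ∈ [t₀, t̃). -/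
/-!
Because `ρ₁` is locally Lipschitz, solutions of `ẏ = -ρ₁ y` are unique forwards and backwards in
time. Hence `0` is an equilibrium and two solutions never cross, so `β` is strictly increasing in
`r` and nonnegative; Grönwall's inequality makes it continuous in `r`. Being nonnegative, `β r`
is nonincreasing, and while it stays above `ε` it decreases at rate at least `ρ₁ ε > 0`, so it
tends to `0`.

For the estimate, `w` is nonincreasing, so `ρ₂ (w t) ≥ c := ρ₂ (w t₀)` and `ẇ ≤ -c ρ₁ (w)` a.e.
The rescaled flow `v t = β (w t₀) (c (t - t₀))` solves `v̇ = -c ρ₁ (v)` with `v t₀ = w t₀`. If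
`t₁` is the last time before `t` with `w ≤ v`, then `w > v` on `(t₁, t]`, and monotonicity of
`ρ₁` gives `w t - w t₁ ≤ ∫ -c ρ₁ (w) ≤ ∫ -c ρ₁ (v) = v t - v t₁`, whence `w t ≤ v t`.
-/
def PosDefFun (f : ℝ → ℝ) : Prop :=
  ContinuousOn f (Set.Ici 0) ∧ f 0 = 0 ∧ ∀ s > 0, 0 < f s

def ClassK (f : ℝ → ℝ) : Prop :=
  PosDefFun f ∧ StrictMonoOn f (Set.Ici 0)

def ClassKInf (f : ℝ → ℝ) : Prop :=
  ClassK f ∧ Filter.Tendsto f Filter.atTop Filter.atTop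

def ClassL (f : ℝ → ℝ) : Prop :=
  ContinuousOn f (Set.Ici 0) ∧ AntitoneOn f (Set.Ici 0) ∧
    (∀ s ≥ 0, 0 ≤ f s) ∧ Filter.Tendsto f Filter.atTop (nhds 0)

def ClassKL (β : ℝ → ℝ → ℝ) : Prop :=
  (∀ s ≥ 0, ClassK (fun r => β r s)) ∧ (∀ r ≥ 0, ClassL (β r))

open Set Filter Topology MeasureTheory

theorem LocallyLipschitz.eqOn_of_isIntegralCurveOn_Icc {E : Type*} [NormedAddCommGroup E]
    [NormedSpace ℝ E] {f : E → E} (hf : LocallyLipschitz f) {y z : ℝ → E} {a b t₀ : ℝ}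
    (hy : IsIntegralCurveOn y (fun _ ↦ f) (Icc a b))
    (hz : IsIntegralCurveOn z (fun _ ↦ f) (Icc a b))
    (ht₀ : t₀ ∈ Icc a b) (heq : y t₀ = z t₀) : EqOn y z (Icc a b) := by
  -- the trajectories stay in a compact set, on which `f` is Lipschitz
  obtain ⟨K, hK⟩ := hf.locallyLipschitzOn.exists_lipschitzOnWith_of_compact
    ((isCompact_Icc.image_of_continuousOn hy.continuousOn).union
      (isCompact_Icc.image_of_continuousOn hz.continuousOn))
  have hys : ∀ t ∈ Icc a b, y t ∈ y '' Icc a b ∪ z '' Icc a b :=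
    fun t ht ↦ Or.inl (mem_image_of_mem y ht)
  have hzs : ∀ t ∈ Icc a b, z t ∈ y '' Icc a b ∪ z '' Icc a b :=
    fun t ht ↦ Or.inr (mem_image_of_mem z ht)
  rw [← Icc_union_Icc_eq_Icc ht₀.1 ht₀.2]
  refine EqOn.union ?_ ?_
  · have hsub : Ioc a t₀ ⊆ Icc a b := fun t ht ↦ ⟨ht.1.le, ht.2.trans ht₀.2⟩
    have hnhds : ∀ t ∈ Ioc a t₀, Icc a b ∈ 𝓝[≤] t :=
      fun t ht ↦ Icc_mem_nhdsLE_of_mem ⟨ht.1, ht.2.trans ht₀.2⟩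
    exact ODE_solution_unique_of_mem_Icc_left (v := fun _ ↦ f) (fun _ _ ↦ hK)
      (hy.continuousOn.mono (Icc_subset_Icc_right ht₀.2))
      (fun t ht ↦ (hy t (hsub ht)).mono_of_mem_nhdsWithin (hnhds t ht))
      (fun t ht ↦ hys t (hsub ht))
      (hz.continuousOn.mono (Icc_subset_Icc_right ht₀.2))
      (fun t ht ↦ (hz t (hsub ht)).mono_of_mem_nhdsWithin (hnhds t ht))
      (fun t ht ↦ hzs t (hsub ht)) heq
  · have hsub : Ico t₀ b ⊆ Icc a b := fun t ht ↦ ⟨ht₀.1.trans ht.1, ht.2.le⟩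
    have hnhds : ∀ t ∈ Ico t₀ b, Icc a b ∈ 𝓝[≥] t :=
      fun t ht ↦ Icc_mem_nhdsGE_of_mem ⟨ht₀.1.trans ht.1, ht.2⟩
    exact ODE_solution_unique_of_mem_Icc_right (v := fun _ ↦ f) (fun _ _ ↦ hK)
      (hy.continuousOn.mono (Icc_subset_Icc_left ht₀.1))
      (fun t ht ↦ (hy t (hsub ht)).mono_of_mem_nhdsWithin (hnhds t ht))
      (fun t ht ↦ hys t (hsub ht))
      (hz.continuousOn.mono (Icc_subset_Icc_left ht₀.1))
      (fun t ht ↦ (hz t (hsub ht)).mono_of_mem_nhdsWithin (hnhds t ht))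
      (fun t ht ↦ hzs t (hsub ht)) heq

theorem LocallyLipschitz.lt_of_isIntegralCurveOn_Icc {f : ℝ → ℝ} (hf : LocallyLipschitz f)
    {y z : ℝ → ℝ} {a b : ℝ} (hy : IsIntegralCurveOn y (fun _ ↦ f) (Icc a b))
    (hz : IsIntegralCurveOn z (fun _ ↦ f) (Icc a b)) (ha : y a < z a) {t : ℝ}
    (ht : t ∈ Icc a b) : y t < z t := by
  by_contra! hzy
  have hgap : ContinuousOn (fun s ↦ z s - y s) (Icc a t) :=
    (hz.continuousOn.sub hy.continuousOn).mono (Icc_subset_Icc_right ht.2)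
  obtain ⟨t₁, ht₁, hcross⟩ :=
    intermediate_value_Icc' ht.1 hgap ⟨sub_nonpos.2 hzy, (sub_pos.2 ha).le⟩
  have := hf.eqOn_of_isIntegralCurveOn_Icc hy hz ⟨ht₁.1, ht₁.2.trans ht.2⟩
    (sub_eq_zero.1 hcross).symm ⟨le_rfl, ht.1.trans ht.2⟩
  exact ha.ne this

theorem PosDefFun.nonneg {f : ℝ → ℝ} (hf : PosDefFun f) {s : ℝ} (hs : 0 ≤ s) : 0 ≤ f s := by
  rcases hs.eq_or_lt with rfl | hs
  · exact hf.2.1.ge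
  · exact (hf.2.2 s hs).le

section DecayCurve

variable {ρ y : ℝ → ℝ}

theorem IsIntegralCurveOn.antitoneOn_of_nonneg (hy : IsIntegralCurveOn y (fun _ x ↦ -ρ x) (Ici 0))
    (hρ : ∀ τ ≥ 0, 0 ≤ ρ (y τ)) : AntitoneOn y (Ici 0) :=
  antitoneOn_of_hasDerivWithinAt_nonpos (convex_Ici 0) hy.continuousOn
    (hy.mono interior_subset) fun τ hτ ↦ neg_nonpos.2 (hρ τ (interior_subset hτ))

theorem IsIntegralCurveOn.tendsto_zero (hy : IsIntegralCurveOn y (fun _ x ↦ -ρ x) (Ici 0))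
    (hρ : MonotoneOn ρ (Ici 0)) (hρpos : ∀ s > 0, 0 < ρ s) (hy₀ : ∀ τ ≥ 0, 0 ≤ y τ)
    (hanti : AntitoneOn y (Ici 0)) : Tendsto y atTop (𝓝 0) := by
  have hsmall : ∀ ε > 0, ∃ τ ≥ 0, y τ < ε := by
    intro ε hε
    by_contra! hlarge
    -- as long as `y ≥ ε`, it decreases at rate at least `ρ ε > 0`
    have hlin : AntitoneOn (fun τ ↦ y τ + ρ ε * τ) (Ici 0) :=
      antitoneOn_of_hasDerivWithinAt_nonpos (convex_Ici 0)
        (hy.continuousOn.add (continuous_const.mul continuous_id).continuousOn)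
        (fun τ hτ ↦ ((hy τ (interior_subset hτ)).mono interior_subset).add
          ((hasDerivAt_id τ).const_mul (ρ ε)).hasDerivWithinAt)
        (fun τ hτ ↦ by
          have := hρ hε.le (hε.le.trans (hlarge τ (interior_subset hτ)))
            (hlarge τ (interior_subset hτ))
          simp only [mul_one]
          linarith)
    have hT : 0 ≤ (y 0 + 1) / ρ ε := div_nonneg (by linarith [hy₀ 0 le_rfl]) (hρpos ε hε).le
    have := hlin self_mem_Ici hT hT
    simp only [mul_zero, add_zero, mul_div_cancel₀ _ (hρpos ε hε).ne'] at this
    linarith [hlarge _ hT]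
  refine tendsto_order.2 ⟨fun a ha ↦ eventually_atTop.2 ⟨0, fun τ hτ ↦ ha.trans_le (hy₀ τ hτ)⟩,
    fun ε hε ↦ ?_⟩
  obtain ⟨τ₀, hτ₀, hlt⟩ := hsmall ε hε
  exact eventually_atTop.2 ⟨τ₀, fun τ hτ ↦ (hanti hτ₀ (hτ₀.trans hτ) hτ).trans_lt hlt⟩

theorem IsIntegralCurveOn.comp_mul_sub
    (hy : IsIntegralCurveOn y (fun _ x ↦ -ρ x) (Ici 0)) {c : ℝ} (hc : 0 ≤ c) (t₀ : ℝ) :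
    IsIntegralCurveOn (fun t ↦ y (c * (t - t₀))) (fun _ x ↦ -(c * ρ x)) (Ici t₀) := by
  intro t ht
  have hmaps : MapsTo (fun t ↦ c * (t - t₀)) (Ici t₀) (Ici 0) :=
    fun u hu ↦ mul_nonneg hc (sub_nonneg.2 hu)
  have hlin : HasDerivWithinAt (fun t ↦ c * (t - t₀)) c (Ici t₀) t := by
    simpa using (((hasDerivAt_id t).sub_const t₀).const_mul c).hasDerivWithinAt
  exact ((hy _ (hmaps ht)).comp t hlin hmaps).congr_deriv (by ring)

end DecayCurve

theorem continuousOn_initial_of_isIntegralCurveOn {ρ : ℝ → ℝ} {β : ℝ → ℝ → ℝ}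
    (hρ : LocallyLipschitz ρ) (hβ0 : ∀ r ≥ 0, β r 0 = r)
    (hβ : ∀ r ≥ 0, IsIntegralCurveOn (β r) (fun _ x ↦ -ρ x) (Ici 0))
    (hβmem : ∀ r ≥ 0, ∀ τ ≥ 0, β r τ ∈ Icc 0 r) {s : ℝ} (hs : 0 ≤ s) :
    ContinuousOn (fun r ↦ β r s) (Ici 0) := by
  intro r₀ hr₀
  set R := r₀ + 1
  obtain ⟨K, hK⟩ :=
    hρ.neg.locallyLipschitzOn.exists_lipschitzOnWith_of_compact (isCompact_Icc (a := 0) (b := R))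
  have hderiv : ∀ q ≥ 0, ∀ t ∈ Ico 0 s, HasDerivWithinAt (β q) (-ρ (β q t)) (Ici t) t :=
    fun q hq t ht ↦ (hβ q hq t ht.1).mono (Ici_subset_Ici.2 ht.1)
  have hmem : ∀ q ∈ Icc 0 R, ∀ t ∈ Ico 0 s, β q t ∈ Icc 0 R :=
    fun q hq t ht ↦ Icc_subset_Icc_right hq.2 (hβmem q hq.1 t ht.1)
  have hLip :
      LipschitzOnWith ⟨Real.exp (K * s), (Real.exp_pos _).le⟩ (fun r ↦ β r s) (Icc 0 R) := by
    refine LipschitzOnWith.of_dist_le_mul fun r hr r' hr' ↦ ?_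
    have := dist_le_of_trajectories_ODE_of_mem (v := fun _ x ↦ -ρ x) (s := fun _ ↦ Icc 0 R)
      (fun _ _ ↦ hK) ((hβ r hr.1).continuousOn.mono Icc_subset_Ici_self) (hderiv r hr.1)
      (hmem r hr) ((hβ r' hr'.1).continuousOn.mono Icc_subset_Ici_self) (hderiv r' hr'.1)
      (hmem r' hr') (by rw [hβ0 r hr.1, hβ0 r' hr'.1]) s (right_mem_Icc.2 hs)
    exact this.trans_eq (by rw [sub_zero, mul_comm]; rfl)
  exact (hLip.continuousOn r₀ ⟨hr₀, by linarith⟩).mono_of_mem_nhdsWithin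
    (mem_nhdsWithin.2 ⟨Iio R, isOpen_Iio, by simp [R], fun x hx ↦ ⟨hx.2, hx.1.le⟩⟩)

theorem classKL_of_isIntegralCurveOn {ρ : ℝ → ℝ} {β : ℝ → ℝ → ℝ} (hρ : ClassK ρ)
    (hlip : LocallyLipschitz ρ) (hβ0 : ∀ r ≥ 0, β r 0 = r)
    (hβ : ∀ r ≥ 0, IsIntegralCurveOn (β r) (fun _ x ↦ -ρ x) (Ici 0)) : ClassKL β := by
  have hcurve : ∀ r ≥ 0, ∀ s, IsIntegralCurveOn (β r) (fun _ x ↦ -ρ x) (Icc 0 s) :=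
    fun r hr s ↦ (hβ r hr).mono Icc_subset_Ici_self
  have hzero : ∀ s, IsIntegralCurveOn (fun _ ↦ (0 : ℝ)) (fun _ x ↦ -ρ x) (Icc 0 s) :=
    fun s t _ ↦ by simpa [hρ.1.2.1] using hasDerivWithinAt_const t (Icc 0 s) (0 : ℝ)
  have hβzero : ∀ s ≥ 0, β 0 s = 0 := fun s hs ↦
    hlip.neg.eqOn_of_isIntegralCurveOn_Icc (hcurve 0 le_rfl s) (hzero s) (left_mem_Icc.2 hs)
      (hβ0 0 le_rfl) (right_mem_Icc.2 hs)
  have hstrict : ∀ s ≥ 0, StrictMonoOn (fun r ↦ β r s) (Ici 0) := fun s hs r hr r' hr' hlt ↦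
    hlip.neg.lt_of_isIntegralCurveOn_Icc (hcurve r hr s) (hcurve r' hr' s)
      (by rwa [hβ0 r hr, hβ0 r' hr']) (right_mem_Icc.2 hs)
  have hnonneg : ∀ r ≥ 0, ∀ s ≥ 0, 0 ≤ β r s := fun r hr s hs ↦
    hβzero s hs ▸ (hstrict s hs).monotoneOn self_mem_Ici hr hr
  have hanti : ∀ r ≥ 0, AntitoneOn (β r) (Ici 0) := fun r hr ↦
    (hβ r hr).antitoneOn_of_nonneg fun τ hτ ↦ hρ.1.nonneg (hnonneg r hr τ hτ)
  refine ⟨fun s hs ↦ ⟨⟨?_, hβzero s hs, fun r hr ↦ ?_⟩, hstrict s hs⟩,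
    fun r hr ↦ ⟨(hβ r hr).continuousOn, hanti r hr, hnonneg r hr, ?_⟩⟩
  · refine continuousOn_initial_of_isIntegralCurveOn hlip hβ0 hβ (fun r hr τ hτ ↦ ?_) hs
    exact ⟨hnonneg r hr τ hτ, by simpa [hβ0 r hr] using hanti r hr self_mem_Ici hτ hτ⟩
  · exact hβzero s hs ▸ hstrict s hs self_mem_Ici hr.le hr
  · exact (hβ r hr).tendsto_zero hρ.2.monotoneOn hρ.1.2.2 (hnonneg r hr) (hanti r hr)

section Primitive

variable {w w' : ℝ → ℝ} {a b : ℝ}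

theorem continuousOn_of_eq_add_integral (hab : a ≤ b)
    (hw : ∀ t ∈ Icc a b, IntervalIntegrable w' volume a t ∧ w t = w a + ∫ s in a..t, w' s) :
    ContinuousOn w (Icc a b) := by
  have hprim := intervalIntegral.continuousOn_primitive_interval'
    (hw b (right_mem_Icc.2 hab)).1 left_mem_uIcc
  rw [uIcc_of_le hab] at hprim
  exact (continuousOn_const.add hprim).congr fun t ht ↦ (hw t ht).2

theorem sub_le_integral_of_ae_le {g : ℝ → ℝ}
    (hw : ∀ t ∈ Icc a b, IntervalIntegrable w' volume a t ∧ w t = w a + ∫ s in a..t, w' s)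
    (hle : ∀ᵐ t ∂volume.restrict (Icc a b), w' t ≤ g t) {s₁ s₂ : ℝ} (ha : a ≤ s₁)
    (hs : s₁ ≤ s₂) (hb : s₂ ≤ b) (hg : IntervalIntegrable g volume s₁ s₂) :
    w s₂ - w s₁ ≤ ∫ u in s₁..s₂, g u := by
  obtain ⟨hint₁, hw₁⟩ := hw s₁ ⟨ha, hs.trans hb⟩
  obtain ⟨hint₂, hw₂⟩ := hw s₂ ⟨ha.trans hs, hb⟩
  have hint : IntervalIntegrable w' volume s₁ s₂ := hint₁.symm.trans hint₂
  have hincr : w s₂ - w s₁ = ∫ u in s₁..s₂, w' u := by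
    rw [hw₁, hw₂, ← intervalIntegral.integral_add_adjacent_intervals hint₁ hint]
    ring
  rw [hincr]
  exact intervalIntegral.integral_mono_ae_restrict hs hint hg
    (ae_restrict_of_ae_restrict_of_subset (Icc_subset_Icc ha hb) hle)

theorem antitoneOn_of_ae_nonpos
    (hw : ∀ t ∈ Icc a b, IntervalIntegrable w' volume a t ∧ w t = w a + ∫ s in a..t, w' s)
    (hle : ∀ᵐ t ∂volume.restrict (Icc a b), w' t ≤ 0) : AntitoneOn w (Icc a b) :=
  fun s₁ hs₁ s₂ hs₂ hs ↦ by
    have := sub_le_integral_of_ae_le (g := fun _ ↦ 0) hw hle hs₁.1 hs hs₂.2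
      intervalIntegrable_const
    rw [intervalIntegral.integral_zero] at this
    linarith

end Primitive

theorem le_of_sub_le_integral_of_isIntegralCurveOn {f w v : ℝ → ℝ} {a b : ℝ} (hab : a ≤ b)
    (hf : Continuous f) (hfm : MonotoneOn f (Ici 0)) (hw : ContinuousOn w (Icc a b))
    (hw' : ∀ s ∈ Icc a b, w b - w s ≤ ∫ u in s..b, -f (w u))
    (hv : IsIntegralCurveOn v (fun _ x ↦ -f x) (Icc a b)) (hv₀ : ∀ t ∈ Icc a b, 0 ≤ v t)
    (ha : w a ≤ v a) : w b ≤ v b := by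
  by_contra! hlt
  -- `t₁` is the last time at which `w ≤ v`
  obtain ⟨t₁, ⟨ht₁, hle⟩, hlast⟩ := (isCompact_Icc.of_isClosed_subset
    ((hw.sub hv.continuousOn).preimage_isClosed_of_isClosed isClosed_Icc isClosed_Iic)
    inter_subset_left).exists_isGreatest ⟨a, left_mem_Icc.2 hab, sub_nonpos.2 ha⟩
  replace hle : w t₁ ≤ v t₁ := sub_nonpos.1 hle
  have hsub : Icc t₁ b ⊆ Icc a b := Icc_subset_Icc_left ht₁.1
  have hgt : ∀ u ∈ Ioo t₁ b, v u < w u := fun u hu ↦ by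
    by_contra! h
    exact (hlast ⟨hsub ⟨hu.1.le, hu.2.le⟩, sub_nonpos.2 h⟩).not_gt hu.1
  have hv_eq : ∫ u in t₁..b, -f (v u) = v b - v t₁ :=
    intervalIntegral.integral_eq_sub_of_hasDerivAt_of_le ht₁.2 (hv.continuousOn.mono hsub)
      (fun u hu ↦ (hv u (hsub (Ioo_subset_Icc_self hu))).hasDerivAt
        (Icc_mem_nhds (ht₁.1.trans_lt hu.1) hu.2))
      ((hf.comp_continuousOn (hv.continuousOn.mono hsub)).neg.intervalIntegrable_of_Icc ht₁.2)
  have hcmp : ∫ u in t₁..b, -f (w u) ≤ ∫ u in t₁..b, -f (v u) :=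
    intervalIntegral.integral_mono_on_of_le_Ioo ht₁.2
      ((hf.comp_continuousOn (hw.mono hsub)).neg.intervalIntegrable_of_Icc ht₁.2)
      ((hf.comp_continuousOn (hv.continuousOn.mono hsub)).neg.intervalIntegrable_of_Icc ht₁.2)
      fun u hu ↦ by
        have hv₀u := hv₀ u (hsub (Ioo_subset_Icc_self hu))
        exact neg_le_neg (hfm hv₀u (hv₀u.trans (hgt u hu).le) (hgt u hu).le)
  linarith [hw' t₁ ht₁]

theorem le_flow_of_ae_deriv_le {α ρ₁ ρ₂ w w' y : ℝ → ℝ} {a b : ℝ} (hab : a ≤ b)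
    (hρ₁ : Continuous ρ₁) (hρ₁m : MonotoneOn ρ₁ (Ici 0)) (hρ₁nn : ∀ x ≥ 0, 0 ≤ ρ₁ x)
    (hρ₂ : AntitoneOn ρ₂ (Ici 0)) (hρ₂nn : ∀ x ≥ 0, 0 ≤ ρ₂ x)
    (hdom : ∀ r ≥ 0, ρ₁ r * ρ₂ r ≤ α r) (hy : IsIntegralCurveOn y (fun _ x ↦ -ρ₁ x) (Ici 0))
    (hy₀ : y 0 = w a) (hynn : ∀ τ ≥ 0, 0 ≤ y τ) (hwnn : ∀ t ∈ Icc a b, 0 ≤ w t)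
    (hw : ∀ t ∈ Icc a b, IntervalIntegrable w' volume a t ∧ w t = w a + ∫ s in a..t, w' s)
    (hae : ∀ᵐ t ∂volume.restrict (Icc a b), w' t ≤ -α (w t)) :
    w b ≤ y (ρ₂ (w a) * (b - a)) := by
  have ha : a ∈ Icc a b := left_mem_Icc.2 hab
  have hwc := continuousOn_of_eq_add_integral hab hw
  have hanti : AntitoneOn w (Icc a b) := by
    refine antitoneOn_of_ae_nonpos hw ?_
    filter_upwards [hae, ae_restrict_mem measurableSet_Icc] with u hu hmem
    nlinarith [hdom _ (hwnn u hmem), hρ₁nn _ (hwnn u hmem), hρ₂nn _ (hwnn u hmem)]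
  set c := ρ₂ (w a)
  have hc : 0 ≤ c := hρ₂nn _ (hwnn a ha)
  -- `w` decreases, so `ρ₂ (w u) ≥ c`
  have hdecay : ∀ᵐ u ∂volume.restrict (Icc a b), w' u ≤ -(c * ρ₁ (w u)) := by
    filter_upwards [hae, ae_restrict_mem measurableSet_Icc] with u hu hmem
    have : c ≤ ρ₂ (w u) := hρ₂ (hwnn u hmem) (hwnn a ha) (hanti ha hmem hmem.1)
    nlinarith [hdom _ (hwnn u hmem), hρ₁nn _ (hwnn u hmem)]
  have hf : Continuous fun x ↦ c * ρ₁ x := continuous_const.mul hρ₁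
  refine le_of_sub_le_integral_of_isIntegralCurveOn hab hf
    (fun x hx x' hx' hxx' ↦ mul_le_mul_of_nonneg_left (hρ₁m hx hx' hxx') hc) hwc
    (fun s hs ↦ sub_le_integral_of_ae_le hw hdecay hs.1 hs.2 le_rfl
      (ContinuousOn.intervalIntegrable_of_Icc hs.2
        (hf.comp_continuousOn (hwc.mono (Icc_subset_Icc_left hs.1))).neg))
    ((hy.comp_mul_sub hc a).mono Icc_subset_Ici_self)
    (fun u hu ↦ hynn _ (mul_nonneg hc (sub_nonneg.2 hu.1))) (by simp [hy₀])

theorem comparison_flow_general (α ρ₁ ρ₂ : ℝ → ℝ) (β : ℝ → ℝ → ℝ)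
    (hρ₁ : ClassKInf ρ₁) (hρ₁lip : LocallyLipschitz ρ₁) (hρ₂ : ClassL ρ₂)
    (hdom : ∀ r ≥ 0, ρ₁ r * ρ₂ r ≤ α r)
    (hβ0 : ∀ r ≥ 0, β r 0 = r)
    (hβode : ∀ r ≥ 0, ∀ τ ≥ 0,
      HasDerivWithinAt (β r) (-(ρ₁ (β r τ))) (Set.Ici 0) τ) :
    ClassKL β ∧
    ∀ (t₀ tEnd : ℝ) (w w' : ℝ → ℝ), 0 ≤ t₀ → t₀ < tEnd →
      (∀ t ∈ Set.Ico t₀ tEnd, 0 ≤ w t) →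
      (∀ t ∈ Set.Ico t₀ tEnd,
        IntervalIntegrable w' MeasureTheory.volume t₀ t ∧
        w t = w t₀ + ∫ s in t₀..t, w' s) →
      (∀ᵐ t ∂(MeasureTheory.volume.restrict (Set.Ico t₀ tEnd)), w' t ≤ -(α (w t))) →
      ∀ t ∈ Set.Ico t₀ tEnd, w t ≤ β (w t₀) (ρ₂ (w t₀) * (t - t₀)) := by
  have hKL := classKL_of_isIntegralCurveOn hρ₁.1 hρ₁lip hβ0 hβode
  refine ⟨hKL, fun t₀ tEnd w w' _ htEnd hwnn hw hae t ht ↦ ?_⟩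
  have hsub : Icc t₀ t ⊆ Ico t₀ tEnd := Icc_subset_Ico_right ht.2
  have hw₀ : 0 ≤ w t₀ := hwnn t₀ (left_mem_Ico.2 htEnd)
  exact le_flow_of_ae_deriv_le ht.1 hρ₁lip.continuous hρ₁.1.2.monotoneOn
    (fun _ ↦ hρ₁.1.1.nonneg) hρ₂.2.1 hρ₂.2.2.1 hdom (hβode _ hw₀) (hβ0 _ hw₀)
    (hKL.2 _ hw₀).2.2.1 (fun u hu ↦ hwnn u (hsub hu)) (fun u hu ↦ hw u (hsub hu))
    (ae_restrict_of_ae_restrict_of_subset hsub hae)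

/-- Comparison lemma along flows (Lemma B.1 / Lemma `L:8` of the paper):
if `α` is positive definite with `α ≥ ρ₁ · ρ₂` for a locally Lipschitz class-K∞ function `ρ₁`
and a class-L function `ρ₂`, and `β (r, ·)` is the (maximal) solution of `dy/dτ = -ρ₁ (y)`
with `β r 0 = r`, then `β` is class-KL, and any nonnegative locally absolutely continuous
function `w` on `[t₀, tEnd)` (encoded via an a.e. derivative `w'` and the integral identity)
satisfying `ẇ(t) ≤ -α (w t)` a.e. obeys `w t ≤ β (w t₀) (ρ₂ (w t₀) * (t - t₀))`. -/
theorem comparison_flow (α ρ₁ ρ₂ : ℝ → ℝ) (β : ℝ → ℝ → ℝ)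
    (hα : PosDefFun α)
    (hρ₁ : ClassKInf ρ₁) (hρ₁lip : LocallyLipschitz ρ₁) (hρ₂ : ClassL ρ₂)
    (hdom : ∀ r ≥ 0, ρ₁ r * ρ₂ r ≤ α r)
    (hβ0 : ∀ r ≥ 0, β r 0 = r)
    (hβode : ∀ r ≥ 0, ∀ τ ≥ 0,
      HasDerivWithinAt (β r) (-(ρ₁ (β r τ))) (Set.Ici 0) τ) :
    ClassKL β ∧
    ∀ (t₀ tEnd : ℝ) (w w' : ℝ → ℝ), 0 ≤ t₀ → t₀ < tEnd →
      (∀ t ∈ Set.Ico t₀ tEnd, 0 ≤ w t) →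
      (∀ t ∈ Set.Ico t₀ tEnd,
        IntervalIntegrable w' MeasureTheory.volume t₀ t ∧
        w t = w t₀ + ∫ s in t₀..t, w' s) →
      (∀ᵐ t ∂(MeasureTheory.volume.restrict (Set.Ico t₀ tEnd)), w' t ≤ -(α (w t))) →
      ∀ t ∈ Set.Ico t₀ tEnd, w t ≤ β (w t₀) (ρ₂ (w t₀) * (t - t₀)) :=
  comparison_flow_general α ρ₁ ρ₂ β hρ₁ hρ₁lip hρ₂ hdom hβ0 hβode
end

section
/- Let ρ : ℝ≥0 → ℝ≥0 be positive definite with ρ(r) < r for all r > 0. Let E = ⋃_{k≥0} ([t_k, t_{k+1}] × {k}) be a hybrid time domain determined by a nondecreasing sequence 0 = t₀ ≤ t₁ ≤ t₂ ≤ …, let z : E → ℝ be such that t ↦ z(t,k) is absolutely continuous on each flow interval and z(0,0) ≥ 0, and let v : E → ℝ≥0 be such that t ↦ v(t,k) is continuous on each flow interval. Assume ż(t,k) ≤ −ρ(max{z(t,k) + v(t,k), 0}) for almost every t in each flow interval, and z(t_{k+1}, k+1) − z(t_{k+1}, k) ≤ −ρ(max{z(t_{k+1},k) + v(t_{k+1},k),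 0}) at each jump. Then there exists a class-KLL function β such that for all (t,j) ∈ E, z(t,j) ≤ max{ β(z(0,0), t, j), sup{ v(t′,j′) : (t′,j′) ∈ E, t′ + j′ ≤ t + j } }. -/
def ClassKLL (β : ℝ → ℝ → ℝ → ℝ) : Prop :=
  (∀ s ≥ 0, ClassKL (fun r j => β r s j)) ∧ (∀ s ≥ 0, ClassKL (fun r t => β r t s))

/-!
As long as `z` stays above `max (sup of the past input) ε`, the value `z + v` lies in
`[ε, 2 z(0,0)]`, where `ρ ≥ δ > 0`; so `z` decreases at rate at least `δ` along flows and by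
at least `δ` at each jump, i.e. by `δ` per unit of hybrid time `τ + k`. Once it has dropped below
the threshold it stays there, since `z` is nonincreasing and the threshold nondecreasing. Hence
`z (τ, k) ≤ max (sup of the past input) ε` after hybrid time `z(0,0) / δ`. The supremum `G a` of
the values of `z` that exceed the past input at hybrid times `≥ a` is therefore antitone and
tends to `0`; a continuous, positive, antitone majorant `ψ` of `G / z(0,0)` gives
`β r s j = r ψ (s + j)`.
-/

open Set Filter Topology MeasureTheory

lemma PosDefFun.nonneg_s5 {ρ : ℝ → ℝ} (hρ : PosDefFun ρ) {x : ℝ} (hx : 0 ≤ x) : 0 ≤ ρ x := by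
  rcases hx.eq_or_lt with rfl | hx
  · exact hρ.2.1.ge
  · exact (hρ.2.2 x hx).le

lemma PosDefFun.exists_pos_le_of_mem_Icc {ρ : ℝ → ℝ} (hρ : PosDefFun ρ) {ε b : ℝ}
    (hε : 0 < ε) (hεb : ε ≤ b) : ∃ δ > 0, ∀ x ∈ Icc ε b, δ ≤ ρ x := by
  obtain ⟨c, hc, hmin⟩ := isCompact_Icc.exists_isMinOn (nonempty_Icc.2 hεb)
    (hρ.1.mono fun x hx => hε.le.trans hx.1)
  exact ⟨ρ c, hρ.2.2 c (hε.trans_le hc.1), fun x hx => hmin hx⟩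

section ClassFunctions

variable {ψ : ℝ → ℝ}

lemma classK_max_mul {c : ℝ} (hc : 0 < c) : ClassK (fun r => max r 0 * c) := by
  refine ⟨⟨((continuous_id.max continuous_const).mul continuous_const).continuousOn,
    by simp, fun s hs => by simpa [hs.le] using mul_pos hs hc⟩, fun a ha b hb hab => ?_⟩
  simpa [max_eq_left (mem_Ici.1 ha), max_eq_left (mem_Ici.1 hb)] using
    mul_lt_mul_of_pos_right hab hc

lemma classL_const_mul_comp_add_max (hψc : Continuous ψ) (hψa : Antitone ψ)
    (hψpos : ∀ x, 0 < ψ x) (hψ : Tendsto ψ atTop (𝓝 0)) {C : ℝ} (hC : 0 ≤ C) (A : ℝ) :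
    ClassL (fun x => C * ψ (A + max x 0)) := by
  refine ⟨(continuous_const.mul
      (hψc.comp (continuous_const.add (continuous_id.max continuous_const)))).continuousOn,
    fun a _ b _ hab => mul_le_mul_of_nonneg_left (hψa (by gcongr)) hC,
    fun s _ => mul_nonneg hC (hψpos _).le, ?_⟩
  have h : Tendsto (fun x : ℝ => A + max x 0) atTop atTop :=
    tendsto_atTop_add_const_left _ A (tendsto_atTop_mono (le_max_left · 0) tendsto_id)
  simpa using (hψ.comp h).const_mul C

lemma classKLL_max_mul_comp_add (hψc : Continuous ψ) (hψa : Antitone ψ)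
    (hψpos : ∀ x, 0 < ψ x) (hψ : Tendsto ψ atTop (𝓝 0)) :
    ClassKLL (fun r s j => max r 0 * ψ (max s 0 + max j 0)) := by
  refine ⟨fun s _ => ⟨fun j _ => classK_max_mul (hψpos _), fun r _ => ?_⟩,
    fun s _ => ⟨fun j _ => classK_max_mul (hψpos _), fun r _ => ?_⟩⟩
  · exact classL_const_mul_comp_add_max hψc hψa hψpos hψ (le_max_right r 0) _
  · simpa only [add_comm] using
      classL_const_mul_comp_add_max hψc hψa hψpos hψ (le_max_right r 0) (max s 0)

end ClassFunctions

lemma Antitone.exists_continuous_majorant {G : ℝ → ℝ} (hGa : Antitone G)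
    (hG : Tendsto G atTop (𝓝 0)) :
    ∃ ψ : ℝ → ℝ, Continuous ψ ∧ Antitone ψ ∧ (∀ x, 0 < ψ x) ∧ Tendsto ψ atTop (𝓝 0) ∧
      ∀ x, G x ≤ ψ x := by
  have hGint : ∀ a b, IntervalIntegrable G volume a b := fun _ _ => hGa.intervalIntegrable
  have hG0 : ∀ x, 0 ≤ G x := hGa.le_of_tendsto hG
  -- average of `G` over `[x - 1, x]`, made strictly positive by an exponential
  let ψ : ℝ → ℝ := fun x => (∫ s in (0 : ℝ)..1, G (x - s)) + Real.exp (-x)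
  have hψc : Continuous ψ := by
    have hprim : Continuous fun x => ∫ s in (0 : ℝ)..x, G s :=
      intervalIntegral.continuous_primitive hGint 0
    have heq : ψ = fun x => ((∫ s in (0 : ℝ)..x, G s) - ∫ s in (0 : ℝ)..(x - 1), G s)
        + Real.exp (-x) := by
      funext x
      show (∫ s in (0 : ℝ)..1, G (x - s)) + _ = _
      rw [intervalIntegral.integral_interval_sub_left (hGint 0 x) (hGint 0 (x - 1)),
        intervalIntegral.integral_comp_sub_left (fun s => G s), sub_zero]
    rw [heq]
    fun_prop
  have hint : ∀ x, IntervalIntegrable (fun s => G (x - s)) volume 0 1 :=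
    fun x => (hGa.comp fun a b hab => by linarith).intervalIntegrable
  have hbounds : ∀ x, G x ≤ ∫ s in (0 : ℝ)..1, G (x - s) ∧
      ∫ s in (0 : ℝ)..1, G (x - s) ≤ G (x - 1) := by
    intro x
    constructor
    · simpa using intervalIntegral.integral_mono_on zero_le_one intervalIntegrable_const (hint x)
        fun s hs => hGa (by linarith [hs.1] : x - s ≤ x)
    · simpa using intervalIntegral.integral_mono_on zero_le_one (hint x) intervalIntegrable_const
        fun s hs => hGa (by linarith [hs.2] : x - 1 ≤ x - s)
  have hψpos : ∀ x, 0 < ψ x :=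
    fun x => add_pos_of_nonneg_of_pos ((hG0 x).trans (hbounds x).1) (Real.exp_pos _)
  refine ⟨ψ, hψc, fun a b hab => ?_, hψpos, ?_, fun x => ?_⟩
  · have := intervalIntegral.integral_mono_on zero_le_one (hint b) (hint a)
      fun s _ => hGa (by linarith : a - s ≤ b - s)
    exact add_le_add this (Real.exp_le_exp.2 (neg_le_neg hab))
  · have hlim : Tendsto (fun x => G (x - 1) + Real.exp (-x)) atTop (𝓝 0) := by
      simpa [sub_eq_add_neg] using
        (hG.comp (tendsto_atTop_add_const_right _ (-1) tendsto_id)).add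
          Real.tendsto_exp_neg_atTop_nhds_zero
    exact squeeze_zero (fun x => (hψpos x).le)
      (fun x => add_le_add_left (hbounds x).2 _) hlim
  · linarith [(hbounds x).1, Real.exp_pos (-x)]

section TailSup

variable {ι : Type*} {f T : ι → ℝ}

/-- The `0` keeps it nonnegative and avoids the junk value of `sSup ∅`. -/
noncomputable def tailSup (f T : ι → ℝ) (a : ℝ) : ℝ :=
  sSup (insert 0 (f '' {i | a ≤ T i}))

lemma bddAbove_insert_zero_image (hf : BddAbove (range f)) (a : ℝ) :
    BddAbove (insert 0 (f '' {i | a ≤ T i})) :=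
  (hf.mono (image_subset_range _ _)).insert 0

lemma tailSup_nonneg (hf : BddAbove (range f)) (a : ℝ) : 0 ≤ tailSup f T a :=
  le_csSup (bddAbove_insert_zero_image hf a) (mem_insert _ _)

lemma le_tailSup (hf : BddAbove (range f)) (i : ι) : f i ≤ tailSup f T (T i) :=
  le_csSup (bddAbove_insert_zero_image hf _) (mem_insert_of_mem _ ⟨i, le_refl (T i), rfl⟩)

lemma tailSup_le {a c : ℝ} (hc : 0 ≤ c) (h : ∀ i, a ≤ T i → f i ≤ c) : tailSup f T a ≤ c :=
  csSup_le (insert_nonempty _ _) (by rintro _ (rfl | ⟨i, hi, rfl⟩); exacts [hc, h i hi])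

lemma antitone_tailSup (hf : BddAbove (range f)) : Antitone (tailSup f T) := fun a _ hab =>
  csSup_le_csSup (bddAbove_insert_zero_image hf a) (insert_nonempty _ _)
    (insert_subset_insert (image_mono fun _ hi => hab.trans hi))

lemma tendsto_tailSup (hf : BddAbove (range f)) (h : ∀ ε > 0, ∃ A, ∀ i, A ≤ T i → f i ≤ ε) :
    Tendsto (tailSup f T) atTop (𝓝 0) := by
  refine tendsto_order.2 ⟨fun b hb => .of_forall fun a => hb.trans_le (tailSup_nonneg hf a),
    fun ε hε => ?_⟩
  obtain ⟨A, hA⟩ := h (ε / 2) (half_pos hε)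
  exact eventually_atTop.2 ⟨A, fun a ha => ((antitone_tailSup hf ha).trans
    (tailSup_le (half_pos hε).le hA)).trans_lt (half_lt_self hε)⟩

end TailSup

section FlowInterval

variable {f f' : ℝ → ℝ} {a b : ℝ}

lemma le_sub_mul_of_ae_le_neg
    (hf : ∀ x ∈ Icc a b, IntervalIntegrable f' volume a x ∧ f x = f a + ∫ s in a..x, f' s)
    {σ τ δ : ℝ} (hσ : a ≤ σ) (hστ : σ ≤ τ) (hτ : τ ≤ b)
    (hf' : ∀ᵐ s ∂volume.restrict (Icc σ τ), f' s ≤ -δ) :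
    f τ ≤ f σ - δ * (τ - σ) := by
  obtain ⟨hiτ, hτeq⟩ := hf τ ⟨hσ.trans hστ, hτ⟩
  obtain ⟨hiσ, hσeq⟩ := hf σ ⟨hσ, hστ.trans hτ⟩
  have hle := intervalIntegral.integral_mono_ae_restrict hστ (hiσ.symm.trans hiτ)
    intervalIntegrable_const hf'
  rw [intervalIntegral.integral_const, smul_eq_mul] at hle
  have hdiff := intervalIntegral.integral_interval_sub_left hiτ hiσ
  linarith [show (τ - σ) * -δ = -(δ * (τ - σ)) by ring]

lemma antitoneOn_of_ae_nonpos_s5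
    (hf : ∀ x ∈ Icc a b, IntervalIntegrable f' volume a x ∧ f x = f a + ∫ s in a..x, f' s)
    (hf' : ∀ᵐ s ∂volume.restrict (Icc a b), f' s ≤ 0) : AntitoneOn f (Icc a b) :=
  fun σ hσ τ hτ hστ => by
    simpa using le_sub_mul_of_ae_le_neg (δ := 0) hf hσ.1 hστ hτ.2
      (by simpa using ae_restrict_of_ae_restrict_of_subset (Icc_subset_Icc hσ.1 hτ.2) hf')

end FlowInterval

def pastValues (t : ℕ → ℝ) (v : ℝ → ℕ → ℝ) (a : ℝ) : Set ℝ :=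
  {x | ∃ (k' : ℕ) (τ' : ℝ), τ' ∈ Icc (t k') (t (k' + 1)) ∧ τ' + (k' : ℝ) ≤ a ∧ x = v τ' k'}

section PastValues

variable {t : ℕ → ℝ} {v : ℝ → ℕ → ℝ}

lemma bddAbove_pastValues (ht : ∀ k, 0 ≤ t k)
    (hv : ∀ k, ContinuousOn (fun τ => v τ k) (Icc (t k) (t (k + 1)))) (a : ℝ) :
    BddAbove (pastValues t v a) := by
  -- only the finitely many flow intervals with `k' ≤ a` contribute
  have hsub : pastValues t v a ⊆
      ⋃ k ∈ Iio (⌊a⌋₊ + 1), (fun τ => v τ k) '' Icc (t k) (t (k + 1)) := by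
    rintro _ ⟨k, τ, hτ, hle, rfl⟩
    have hk : (k : ℝ) ≤ a := by linarith [ht k, hτ.1]
    exact mem_biUnion (Nat.lt_succ_of_le (Nat.le_floor hk)) ⟨τ, hτ, rfl⟩
  refine BddAbove.mono hsub ?_
  rw [(finite_Iio _).bddAbove_biUnion]
  exact fun k _ => (isCompact_Icc.image_of_continuousOn (hv k)).bddAbove

lemma le_sSup_pastValues (ht : ∀ k, 0 ≤ t k)
    (hv : ∀ k, ContinuousOn (fun τ => v τ k) (Icc (t k) (t (k + 1))))
    {k : ℕ} {τ : ℝ} (hτ : τ ∈ Icc (t k) (t (k + 1))) : v τ k ≤ sSup (pastValues t v (τ + k)) :=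
  le_csSup (bddAbove_pastValues ht hv _) ⟨k, τ, hτ, le_rfl, rfl⟩

lemma sSup_pastValues_mono (ht0 : t 0 = 0) (ht : Monotone t)
    (hv : ∀ k, ContinuousOn (fun τ => v τ k) (Icc (t k) (t (k + 1))))
    {a b : ℝ} (ha : 0 ≤ a) (hab : a ≤ b) :
    sSup (pastValues t v a) ≤ sSup (pastValues t v b) := by
  have hnonneg : ∀ k, 0 ≤ t k := fun k => ht0 ▸ ht k.zero_le
  refine csSup_le_csSup (bddAbove_pastValues hnonneg hv b)
    ⟨v 0 0, 0, 0, ⟨ht0.le, hnonneg 1⟩, by simpa using ha, rfl⟩ ?_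
  rintro _ ⟨k, τ, hτ, hle, rfl⟩
  exact ⟨k, τ, hτ, hle.trans hab, rfl⟩

end PastValues

structure IsHybridComparisonArc (ρ : ℝ → ℝ) (t : ℕ → ℝ) (z z' v : ℝ → ℕ → ℝ) : Prop where
  t_zero : t 0 = 0
  monotone_t : Monotone t
  nonneg_v : ∀ k, ∀ τ ∈ Icc (t k) (t (k + 1)), 0 ≤ v τ k
  continuousOn_v : ∀ k, ContinuousOn (fun τ => v τ k) (Icc (t k) (t (k + 1)))
  integral_flow : ∀ k, ∀ τ ∈ Icc (t k) (t (k + 1)),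
    IntervalIntegrable (fun s => z' s k) volume (t k) τ ∧
      z τ k = z (t k) k + ∫ s in (t k)..τ, z' s k
  deriv_le : ∀ k, ∀ᵐ τ ∂volume.restrict (Icc (t k) (t (k + 1))),
    z' τ k ≤ -ρ (max (z τ k + v τ k) 0)
  jump_le : ∀ k, z (t (k + 1)) (k + 1) - z (t (k + 1)) k ≤
    -ρ (max (z (t (k + 1)) k + v (t (k + 1)) k) 0)

namespace IsHybridComparisonArc

variable {ρ : ℝ → ℝ} {t : ℕ → ℝ} {z z' v : ℝ → ℕ → ℝ} {ε δ : ℝ}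

lemma nonneg_t (h : IsHybridComparisonArc ρ t z z' v) (k : ℕ) : 0 ≤ t k :=
  h.t_zero ▸ h.monotone_t k.zero_le

lemma antitoneOn_flow (h : IsHybridComparisonArc ρ t z z' v) (hρ : PosDefFun ρ) (k : ℕ) :
    AntitoneOn (fun τ => z τ k) (Icc (t k) (t (k + 1))) :=
  antitoneOn_of_ae_nonpos_s5 (h.integral_flow k) <| (h.deriv_le k).mono fun _ hτ =>
    hτ.trans (neg_nonpos.2 (hρ.nonneg_s5 (le_max_right _ _)))

lemma jump_le_self (h : IsHybridComparisonArc ρ t z z' v) (hρ : PosDefFun ρ) (k : ℕ) :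
    z (t (k + 1)) (k + 1) ≤ z (t (k + 1)) k := by
  linarith [h.jump_le k, hρ.nonneg_s5 (le_max_right (z (t (k + 1)) k + v (t (k + 1)) k) 0)]

lemma le_initial (h : IsHybridComparisonArc ρ t z z' v) (hρ : PosDefFun ρ) {k : ℕ} {τ : ℝ}
    (hτ : τ ∈ Icc (t k) (t (k + 1))) : z τ k ≤ z 0 0 := by
  induction k generalizing τ with
  | zero =>
    simpa [h.t_zero] using h.antitoneOn_flow hρ 0 ⟨le_rfl, h.monotone_t zero_le_one⟩ hτ hτ.1
  | succ k ih =>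
    calc z τ (k + 1) ≤ z (t (k + 1)) (k + 1) :=
          h.antitoneOn_flow hρ (k + 1) ⟨le_rfl, h.monotone_t k.succ.le_succ⟩ hτ hτ.1
      _ ≤ z (t (k + 1)) k := h.jump_le_self hρ k
      _ ≤ z 0 0 := ih ⟨h.monotone_t k.le_succ, le_rfl⟩

lemma exists_pos_decay_rate (h : IsHybridComparisonArc ρ t z z' v) (hρ : PosDefFun ρ) (hε : 0 < ε) :
    ∃ δ > 0, ∀ k, ∀ σ ∈ Icc (t k) (t (k + 1)), max (sSup (pastValues t v (σ + k))) ε < z σ k →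
      δ ≤ ρ (max (z σ k + v σ k) 0) := by
  -- above the threshold, `z + v` lies in `[ε, 2 z(0,0)]`, where `ρ` is bounded below
  obtain ⟨δ, hδ, hρδ⟩ := hρ.exists_pos_le_of_mem_Icc hε (le_max_left ε (2 * z 0 0))
  refine ⟨δ, hδ, fun k σ hσ hlt => ?_⟩
  obtain ⟨hV, hεz⟩ := max_lt_iff.1 hlt
  have hv := h.nonneg_v k σ hσ
  have hvV := le_sSup_pastValues h.nonneg_t h.continuousOn_v hσ
  have hz := h.le_initial hρ hσ
  rw [max_eq_left (by linarith)]
  exact hρδ _ ⟨by linarith, le_max_of_le_right (by linarith)⟩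

lemma le_max_of_rate_of_flow (h : IsHybridComparisonArc ρ t z z' v) (hρ : PosDefFun ρ)
    (hrate : ∀ k, ∀ σ ∈ Icc (t k) (t (k + 1)),
      max (sSup (pastValues t v (σ + k))) ε < z σ k → δ ≤ ρ (max (z σ k + v σ k) 0))
    {k : ℕ} (hk : z (t k) k ≤
      max (max (sSup (pastValues t v (t k + k))) ε) (z 0 0 - δ * (t k + k)))
    {τ : ℝ} (hτ : τ ∈ Icc (t k) (t (k + 1))) :
    z τ k ≤ max (max (sSup (pastValues t v (τ + k))) ε) (z 0 0 - δ * (τ + k)) := by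
  by_cases hdrop : ∃ σ ∈ Icc (t k) τ, z σ k ≤ max (sSup (pastValues t v (σ + k))) ε
  · obtain ⟨σ, hσ, hσz⟩ := hdrop
    refine le_max_of_le_left ?_
    calc z τ k ≤ z σ k := h.antitoneOn_flow hρ k ⟨hσ.1, hσ.2.trans hτ.2⟩ hτ hσ.2
      _ ≤ max (sSup (pastValues t v (σ + k))) ε := hσz
      _ ≤ max (sSup (pastValues t v (τ + k))) ε := max_le_max_right _ <|
          sSup_pastValues_mono h.t_zero h.monotone_t h.continuousOn_v
            (by linarith [h.nonneg_t k, hσ.1, k.cast_nonneg (α := ℝ)]) (by linarith [hσ.2])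
  · push Not at hdrop
    have hae : ∀ᵐ s ∂volume.restrict (Icc (t k) τ), z' s k ≤ -δ := by
      filter_upwards [ae_restrict_of_ae_restrict_of_subset (Icc_subset_Icc_right hτ.2)
        (h.deriv_le k), ae_restrict_mem measurableSet_Icc] with s hs hsI
      exact hs.trans (neg_le_neg (hrate k s ⟨hsI.1, hsI.2.trans hτ.2⟩ (hdrop s hsI)))
    have hflow : z τ k ≤ z (t k) k - δ * (τ - t k) :=
      le_sub_mul_of_ae_le_neg (h.integral_flow k) le_rfl hτ.1 hτ.2 hae
    have hstart : z (t k) k ≤ z 0 0 - δ * (t k + k) :=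
      (le_max_iff.1 hk).resolve_left (not_le.2 (hdrop _ ⟨le_rfl, hτ.1⟩))
    exact le_max_of_le_right (by linarith)

lemma le_max_of_rate_of_jump (h : IsHybridComparisonArc ρ t z z' v) (hρ : PosDefFun ρ)
    (hrate : ∀ k, ∀ σ ∈ Icc (t k) (t (k + 1)),
      max (sSup (pastValues t v (σ + k))) ε < z σ k → δ ≤ ρ (max (z σ k + v σ k) 0))
    {k : ℕ} (hk : z (t (k + 1)) k ≤
      max (max (sSup (pastValues t v (t (k + 1) + k))) ε) (z 0 0 - δ * (t (k + 1) + k))) :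
    z (t (k + 1)) (k + 1) ≤ max (max (sSup (pastValues t v (t (k + 1) + ↑(k + 1)))) ε)
      (z 0 0 - δ * (t (k + 1) + ↑(k + 1))) := by
  have hcast : t (k + 1) + ((k + 1 : ℕ) : ℝ) = t (k + 1) + k + 1 := by push_cast; ring
  by_cases hlow : z (t (k + 1)) k ≤ max (sSup (pastValues t v (t (k + 1) + k))) ε
  · refine le_max_of_le_left ((h.jump_le_self hρ k).trans (hlow.trans (max_le_max_right _ ?_)))
    exact sSup_pastValues_mono h.t_zero h.monotone_t h.continuousOn_v
      (by linarith [h.nonneg_t (k + 1), k.cast_nonneg (α := ℝ)]) (by linarith)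
  · have hρδ := hrate k _ ⟨h.monotone_t k.le_succ, le_rfl⟩ (not_le.1 hlow)
    have hstart := (le_max_iff.1 hk).resolve_left hlow
    refine le_max_of_le_right ?_
    rw [hcast]
    linarith [h.jump_le k]

lemma le_max_of_rate (h : IsHybridComparisonArc ρ t z z' v) (hρ : PosDefFun ρ)
    (hrate : ∀ k, ∀ σ ∈ Icc (t k) (t (k + 1)),
      max (sSup (pastValues t v (σ + k))) ε < z σ k → δ ≤ ρ (max (z σ k + v σ k) 0))
    {k : ℕ} {τ : ℝ} (hτ : τ ∈ Icc (t k) (t (k + 1))) :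
    z τ k ≤ max (max (sSup (pastValues t v (τ + k))) ε) (z 0 0 - δ * (τ + k)) := by
  suffices hstart : ∀ k : ℕ, z (t k) k ≤
      max (max (sSup (pastValues t v (t k + k))) ε) (z 0 0 - δ * (t k + k)) from
    h.le_max_of_rate_of_flow hρ hrate (hstart k) hτ
  intro k
  induction k with
  | zero => simp [h.t_zero]
  | succ k ih =>
    exact h.le_max_of_rate_of_jump hρ hrate
      (h.le_max_of_rate_of_flow hρ hrate ih ⟨h.monotone_t k.le_succ, le_rfl⟩)

lemma exists_le_max_sSup_pastValues (h : IsHybridComparisonArc ρ t z z' v) (hρ : PosDefFun ρ)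
    (hε : 0 < ε) : ∃ A, ∀ k, ∀ τ ∈ Icc (t k) (t (k + 1)), A ≤ τ + k →
      z τ k ≤ max (sSup (pastValues t v (τ + k))) ε := by
  obtain ⟨δ, hδ, hrate⟩ := h.exists_pos_decay_rate hρ hε
  refine ⟨z 0 0 / δ, fun k τ hτ hA => ?_⟩
  have hdecayed : z 0 0 - δ * (τ + k) ≤ ε := by
    linarith [(div_le_iff₀' hδ).1 hA]
  exact (h.le_max_of_rate hρ hrate hτ).trans (max_le le_rfl (hdecayed.trans (le_max_right _ _)))

lemma exists_le_max_mul_sSup_pastValues (h : IsHybridComparisonArc ρ t z z' v)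
    (hρ : PosDefFun ρ) :
    ∃ ψ : ℝ → ℝ, Continuous ψ ∧ Antitone ψ ∧ (∀ x, 0 < ψ x) ∧ Tendsto ψ atTop (𝓝 0) ∧
      ∀ k, ∀ τ ∈ Icc (t k) (t (k + 1)),
        z τ k ≤ max (max (z 0 0) 0 * ψ (τ + k)) (sSup (pastValues t v (τ + k))) := by
  let S := {p : ℝ × ℕ | p.1 ∈ Icc (t p.2) (t (p.2 + 1)) ∧
    sSup (pastValues t v (p.1 + p.2)) < z p.1 p.2}
  let G := tailSup (fun p : S => z p.1.1 p.1.2) (fun p => p.1.1 + p.1.2)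
  set c := max (z 0 0) 0
  have hzS : ∀ p : S, z p.1.1 p.1.2 ≤ c :=
    fun p => (h.le_initial hρ p.2.1).trans (le_max_left _ _)
  have hbdd : BddAbove (range fun p : S => z p.1.1 p.1.2) :=
    ⟨c, by rintro _ ⟨p, rfl⟩; exact hzS p⟩
  have hG : Tendsto G atTop (𝓝 0) := by
    refine tendsto_tailSup hbdd fun ε hε => ?_
    obtain ⟨A, hA⟩ := h.exists_le_max_sSup_pastValues hρ hε
    exact ⟨A, fun p hp => (le_max_iff.1 (hA _ _ p.2.1 hp)).resolve_left (not_le.2 p.2.2)⟩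
  obtain ⟨ψ, hψc, hψa, hψpos, hψ, hGψ⟩ := Antitone.exists_continuous_majorant
    (G := fun a => G a / c) (fun a b hab => div_le_div_of_nonneg_right
      (antitone_tailSup hbdd hab) (le_max_right _ _)) (by simpa using hG.div_const c)
  refine ⟨ψ, hψc, hψa, hψpos, hψ, fun k τ hτ => ?_⟩
  by_cases hz : sSup (pastValues t v (τ + k)) < z τ k
  · have hzG : z τ k ≤ G (τ + k) := le_tailSup hbdd (⟨(τ, k), hτ, hz⟩ : S)
    refine le_max_of_le_left (hzG.trans ?_)
    rcases (le_max_right (z 0 0) 0).eq_or_lt with hc0 | hc0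
    · have hc0 : c = 0 := hc0.symm
      rw [hc0, zero_mul]
      exact tailSup_le le_rfl fun p _ => hc0 ▸ hzS p
    · exact (div_le_iff₀' hc0).1 (hGψ _)
  · exact le_max_of_le_right (not_lt.1 hz)

end IsHybridComparisonArc

theorem hybrid_comparison_with_input_general (ρ : ℝ → ℝ)
    (hρ : PosDefFun ρ)
    (t : ℕ → ℝ) (ht0 : t 0 = 0) (htmono : Monotone t)
    (z z' v : ℝ → ℕ → ℝ)
    (hvnn : ∀ k : ℕ, ∀ τ ∈ Set.Icc (t k) (t (k + 1)), 0 ≤ v τ k)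
    (hvcont : ∀ k : ℕ, ContinuousOn (fun τ => v τ k) (Set.Icc (t k) (t (k + 1))))
    (hAC : ∀ k : ℕ, ∀ τ ∈ Set.Icc (t k) (t (k + 1)),
      IntervalIntegrable (fun s => z' s k) MeasureTheory.volume (t k) τ ∧
      z τ k = z (t k) k + ∫ s in (t k)..τ, z' s k)
    (hflow : ∀ k : ℕ,
      ∀ᵐ τ ∂(MeasureTheory.volume.restrict (Set.Icc (t k) (t (k + 1)))),
        z' τ k ≤ -(ρ (max (z τ k + v τ k) 0)))
    (hjump : ∀ k : ℕ,
      z (t (k + 1)) (k + 1) - z (t (k + 1)) k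
        ≤ -(ρ (max (z (t (k + 1)) k + v (t (k + 1)) k) 0))) :
    ∃ β : ℝ → ℝ → ℝ → ℝ, ClassKLL β ∧
      ∀ k : ℕ, ∀ τ ∈ Set.Icc (t k) (t (k + 1)),
        z τ k ≤ max (β (z 0 0) τ (k : ℝ))
          (sSup {x : ℝ | ∃ (k' : ℕ) (τ' : ℝ),
            τ' ∈ Set.Icc (t k') (t (k' + 1)) ∧ τ' + (k' : ℝ) ≤ τ + (k : ℝ) ∧
            x = v τ' k'}) := by
  have h : IsHybridComparisonArc ρ t z z' v := ⟨ht0, htmono, hvnn, hvcont, hAC, hflow, hjump⟩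
  obtain ⟨ψ, hψc, hψa, hψpos, hψ, hz⟩ := h.exists_le_max_mul_sSup_pastValues hρ
  refine ⟨fun r s j => max r 0 * ψ (max s 0 + max j 0),
    classKLL_max_mul_comp_add hψc hψa hψpos hψ, fun k τ hτ => ?_⟩
  show z τ k ≤
    max (max (z 0 0) 0 * ψ (max τ 0 + max (k : ℝ) 0)) (sSup (pastValues t v (τ + k)))
  rw [max_eq_left ((h.nonneg_t k).trans hτ.1), max_eq_left k.cast_nonneg]
  exact hz k τ hτ

/-- Lemma `L:2` of the paper: for a positive definite `ρ` with `ρ r < r` for `r > 0`,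
a hybrid arc `z` on the hybrid time domain `E = ⋃ₖ [t k, t (k+1)] × {k}` (with `t`
nondecreasing and `t 0 = 0`, `z` absolutely continuous along flows, encoded via the a.e.
derivative `z'` and the integral identity, and `z (0,0) ≥ 0`) and a nonnegative hybrid
signal `v` continuous along flows, satisfying
`ż ≤ -ρ (max (z + v) 0)` a.e. along flows and the corresponding decrease at jumps,
obey `z (τ,k) ≤ max (β (z (0,0)) τ k) (sup of v over earlier hybrid times)`
for some class-KLL function `β`. -/
theorem hybrid_comparison_with_input (ρ : ℝ → ℝ)
    (hρ : PosDefFun ρ) (hρlt : ∀ r > 0, ρ r < r)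
    (t : ℕ → ℝ) (ht0 : t 0 = 0) (htmono : Monotone t)
    (z z' v : ℝ → ℕ → ℝ)
    (hz00 : 0 ≤ z 0 0)
    (hvnn : ∀ k : ℕ, ∀ τ ∈ Set.Icc (t k) (t (k + 1)), 0 ≤ v τ k)
    (hvcont : ∀ k : ℕ, ContinuousOn (fun τ => v τ k) (Set.Icc (t k) (t (k + 1))))
    (hAC : ∀ k : ℕ, ∀ τ ∈ Set.Icc (t k) (t (k + 1)),
      IntervalIntegrable (fun s => z' s k) MeasureTheory.volume (t k) τ ∧
      z τ k = z (t k) k + ∫ s in (t k)..τ, z' s k)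
    (hflow : ∀ k : ℕ,
      ∀ᵐ τ ∂(MeasureTheory.volume.restrict (Set.Icc (t k) (t (k + 1)))),
        z' τ k ≤ -(ρ (max (z τ k + v τ k) 0)))
    (hjump : ∀ k : ℕ,
      z (t (k + 1)) (k + 1) - z (t (k + 1)) k
        ≤ -(ρ (max (z (t (k + 1)) k + v (t (k + 1)) k) 0))) :
    ∃ β : ℝ → ℝ → ℝ → ℝ, ClassKLL β ∧
      ∀ k : ℕ, ∀ τ ∈ Set.Icc (t k) (t (k + 1)),
        z τ k ≤ max (β (z 0 0) τ (k : ℝ))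
          (sSup {x : ℝ | ∃ (k' : ℕ) (τ' : ℝ),
            τ' ∈ Set.Icc (t k') (t (k' + 1)) ∧ τ' + (k' : ℝ) ≤ τ + (k : ℝ) ∧
            x = v τ' k'}) :=
  hybrid_comparison_with_input_general ρ hρ t ht0 htmono z z' v hvnn hvcont hAC hflow hjump
end

section
/- Given L, γ > 0, define 𝒯(γ,L) := (1/(L·r₀))·arctan(r₀) if γ > L, 𝒯(γ,L) := 1/L if γ = L, and 𝒯(γ,L) := (1/(L·r₀))·artanh(r₀) if γ < L, where r₀ := √|(γ/L)² − 1|. For c > 1 and λ ∈ (0,1) let r := √|(γ/L)² − c| and define T̃(c,λ,L,γ) := (1/(L·r))·arctan( r(1−λ) / ( 2·(λ/(λ+1))·((γ/L)·((c+1)/2) − 1) + 1 + λ ) ) if L < γ√c; T̃ := (1/L)·(1−λ²)/(λ² + (γ/L)(1+c)λ + 1) if L = γ√c; and T̃ := (1/(L·r))·artanh( r(1−λ) / ( 2·(λ/(λ+1))·((γ/L)·((c+1)/2) − 1) + 1 + λ ) ) if L > γ√c. Then for every τ with 0 < τ < 𝒯(γ,L) there exist c > 1 and λ ∈ (0,1)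 such that T̃(c,λ,L,γ) = τ. -/
/-!
For fixed `c`, as `λ` runs through `(0, 1)` the argument of `arctan` / `artanh` in `T̃` moves
continuously from `r = √|(γ/L)² - c|` down to `0`, so by the intermediate value theorem
`T̃(c, ·, L, γ)` takes every value in `(0, φ(r) / (L r))`, `φ` being `arctan` or `artanh`.
It remains to pick `c > 1` in the right branch with `τ < φ(r) / (L r)`. For `γ ≠ L` the bound
at `c = 1` is `𝒯(γ, L)`, so any `c` close enough to `1` works by continuity; for `γ = L` take
`c = 1 + r²` with `r` small, since `arctan r / r → 1 = L 𝒯(L, L)` as `r → 0⁺`.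
-/

/-- Inverse hyperbolic tangent. -/
noncomputable def artanh (x : ℝ) : ℝ := (1 / 2) * Real.log ((1 + x) / (1 - x))

/-- The maximum allowable sampling period `𝒯(γ, L)` of Nešić et al. -/
noncomputable def calT (gam L : ℝ) : ℝ :=
  let r := Real.sqrt |(gam / L) ^ 2 - 1|
  if L < gam then (1 / (L * r)) * Real.arctan r
  else if gam = L then 1 / L
  else (1 / (L * r)) * artanh r

/-- The time `T̃(c, λ, L, γ)` from Lemma `L:03` of the paper. -/
noncomputable def Ttilde (c lam L gam : ℝ) : ℝ :=
  let r := Real.sqrt |(gam / L) ^ 2 - c|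
  if L < gam * Real.sqrt c then
    (1 / (L * r)) * Real.arctan
      (r * (1 - lam) / (2 * (lam / (lam + 1)) * ((gam / L) * ((c + 1) / 2) - 1) + 1 + lam))
  else if L = gam * Real.sqrt c then
    (1 / L) * ((1 - lam ^ 2) / (lam ^ 2 + (gam / L) * (1 + c) * lam + 1))
  else
    (1 / (L * r)) * artanh
      (r * (1 - lam) / (2 * (lam / (lam + 1)) * ((gam / L) * ((c + 1) / 2) - 1) + 1 + lam))

open Set Filter Topology

-- The argument of `arctan` / `artanh` in `Ttilde`, where `q = (γ / L) * ((c + 1) / 2)`.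
noncomputable def ttildeArg (r q lam : ℝ) : ℝ :=
  r * (1 - lam) / (2 * (lam / (lam + 1)) * (q - 1) + 1 + lam)

section ttildeArg

variable {r q : ℝ}

lemma ttildeArg_eq {lam : ℝ} (hlam : lam + 1 ≠ 0) :
    ttildeArg r q lam = r * ((1 - lam) * (lam + 1)) / (lam ^ 2 + 2 * q * lam + 1) := by
  have hden : 2 * (lam / (lam + 1)) * (q - 1) + 1 + lam =
      (lam ^ 2 + 2 * q * lam + 1) / (lam + 1) := by
    field_simp
    ring
  rw [ttildeArg, hden, div_div_eq_mul_div]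
  ring

@[simp] lemma ttildeArg_zero : ttildeArg r q 0 = r := by simp [ttildeArg]

@[simp] lemma ttildeArg_one : ttildeArg r q 1 = 0 := by simp [ttildeArg]

lemma ttildeArg_mem_Icc (hr : 0 ≤ r) (hq : 0 ≤ q) {lam : ℝ} (hlam : lam ∈ Icc (0 : ℝ) 1) :
    ttildeArg r q lam ∈ Icc 0 r := by
  obtain ⟨h0, h1⟩ := hlam
  have hden : 0 < lam ^ 2 + 2 * q * lam + 1 := by positivity
  rw [ttildeArg_eq (by linarith)]
  constructor
  · exact div_nonneg (mul_nonneg hr (mul_nonneg (by linarith) (by linarith))) hden.le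
  · rw [div_le_iff₀ hden]
    exact mul_le_mul_of_nonneg_left (by nlinarith) hr

lemma continuousOn_ttildeArg (hq : 0 ≤ q) : ContinuousOn (ttildeArg r q) (Icc 0 1) := by
  have hrat : ContinuousOn
      (fun lam => r * ((1 - lam) * (lam + 1)) / (lam ^ 2 + 2 * q * lam + 1)) (Icc 0 1) :=
    ContinuousOn.div (by fun_prop) (by fun_prop) fun lam hlam => by
      have := hlam.1
      positivity
  exact hrat.congr fun lam hlam => ttildeArg_eq (by linarith [hlam.1])

lemma exists_ttildeArg_eq {f : ℝ → ℝ} (hr : 0 ≤ r) (hq : 0 ≤ q) (hf : ContinuousOn f (Icc 0 r))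
    {y : ℝ} (hy : y ∈ Ioo (f 0) (f r)) : ∃ lam ∈ Ioo (0 : ℝ) 1, f (ttildeArg r q lam) = y := by
  have hcont : ContinuousOn (f ∘ ttildeArg r q) (Icc 0 1) :=
    hf.comp (continuousOn_ttildeArg hq) fun _ hlam => ttildeArg_mem_Icc hr hq hlam
  simpa using intermediate_value_Ioo' zero_le_one hcont (by simpa using hy)

end ttildeArg

lemma artanh_zero : artanh 0 = 0 := by simp [artanh]

lemma continuousOn_artanh : ContinuousOn artanh (Ioo (-1) 1) := fun x ⟨h1, h2⟩ => by
  have hpos : 0 < (1 + x) / (1 - x) := div_pos (by linarith) (by linarith)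
  have hcont : ContinuousAt (fun y => 1 / 2 * Real.log ((1 + y) / (1 - y))) x := by
    fun_prop (disch := first | exact hpos.ne' | linarith)
  exact hcont.continuousWithinAt

lemma exists_pos_lt_arctan_div {a : ℝ} (ha : a < 1) : ∃ r > 0, a < Real.arctan r / r := by
  have h : Tendsto (fun r => Real.arctan r / r) (𝓝[>] 0) (𝓝 1) := by
    simpa [div_eq_inv_mul] using (Real.hasDerivAt_arctan 0).tendsto_slope_zero_right
  obtain ⟨r, hr, hr0⟩ := ((h.eventually (lt_mem_nhds ha)).and self_mem_nhdsWithin).exists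
  exact ⟨r, hr0, hr⟩

lemma exists_mem_Ioo_lt_of_continuousAt {φ : ℝ → ℝ} {L k τ b : ℝ} (hL : L ≠ 0) (hk : k ≠ 1)
    (hφ : ContinuousAt φ √|k - 1|) (hτ : τ < 1 / (L * √|k - 1|) * φ √|k - 1|) (hb : 1 < b) :
    ∃ c ∈ Ioo 1 b, τ < 1 / (L * √|k - c|) * φ √|k - c| := by
  have hr : √|k - 1| ≠ 0 := Real.sqrt_ne_zero'.2 (abs_pos.2 (sub_ne_zero.2 hk))
  have hsqrt : ContinuousAt (fun c : ℝ => √|k - c|) 1 := by fun_prop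
  have hcont : ContinuousAt (fun c => 1 / (L * √|k - c|) * φ √|k - c|) 1 :=
    (continuousAt_const.div (continuousAt_const.mul hsqrt) (mul_ne_zero hL hr)).mul
      (hφ.comp (f := fun c => √|k - c|) hsqrt)
  have hev : ∀ᶠ c in 𝓝[>] 1, τ < 1 / (L * √|k - c|) * φ √|k - c| :=
    nhdsWithin_le_nhds (hcont.eventually (eventually_gt_nhds hτ))
  exact ((hev.and (Ioo_mem_nhdsGT hb)).exists).imp fun c h => ⟨h.2, h.1⟩

section branches

variable {c L gam τ : ℝ}

lemma exists_Ttilde_eq_of_lt_mul_sqrt (hL : 0 ≤ L) (hgam : 0 ≤ gam) (hbranch : L < gam * √c)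
    (hτ : 0 < τ)
    (hτr : τ < 1 / (L * √|(gam / L) ^ 2 - c|) * Real.arctan √|(gam / L) ^ 2 - c|) :
    ∃ lam, 0 < lam ∧ lam < 1 ∧ Ttilde c lam L gam = τ := by
  have hc : 0 < c := Real.sqrt_pos.1 (pos_of_mul_pos_right (hL.trans_lt hbranch) hgam)
  obtain ⟨lam, ⟨h0, h1⟩, hlam⟩ :=
    exists_ttildeArg_eq (q := gam / L * ((c + 1) / 2))
      (f := fun x => 1 / (L * √|(gam / L) ^ 2 - c|) * Real.arctan x)
      (Real.sqrt_nonneg _) (mul_nonneg (div_nonneg hgam hL) (by linarith)) (by fun_prop)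
      ⟨by simpa using hτ, hτr⟩
  refine ⟨lam, h0, h1, ?_⟩
  simp only [Ttilde, if_pos hbranch]
  exact hlam

lemma exists_Ttilde_eq_of_mul_sqrt_lt (hL : 0 ≤ L) (hgam : 0 ≤ gam) (hc : 0 ≤ c)
    (hbranch : gam * √c < L) (hr : √|(gam / L) ^ 2 - c| < 1) (hτ : 0 < τ)
    (hτr : τ < 1 / (L * √|(gam / L) ^ 2 - c|) * artanh √|(gam / L) ^ 2 - c|) :
    ∃ lam, 0 < lam ∧ lam < 1 ∧ Ttilde c lam L gam = τ := by
  have hf : ContinuousOn artanh (Icc 0 √|(gam / L) ^ 2 - c|) :=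
    continuousOn_artanh.mono fun x hx => ⟨by linarith [hx.1], hx.2.trans_lt hr⟩
  obtain ⟨lam, ⟨h0, h1⟩, hlam⟩ :=
    exists_ttildeArg_eq (q := gam / L * ((c + 1) / 2))
      (f := fun x => 1 / (L * √|(gam / L) ^ 2 - c|) * artanh x)
      (Real.sqrt_nonneg _) (mul_nonneg (div_nonneg hgam hL) (by linarith))
      (continuousOn_const.mul hf) ⟨by simpa [artanh_zero] using hτ, hτr⟩
  refine ⟨lam, h0, h1, ?_⟩
  simp only [Ttilde, if_neg (not_lt.2 hbranch.le), if_neg hbranch.ne']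
  exact hlam

lemma exists_Ttilde_eq_of_lt (hL : 0 < L) (hlt : L < gam) (hτ : 0 < τ) (hτT : τ < calT gam L) :
    ∃ c lam, 1 < c ∧ 0 < lam ∧ lam < 1 ∧ Ttilde c lam L gam = τ := by
  have hgam : 0 < gam := hL.trans hlt
  have hk : 1 < (gam / L) ^ 2 := one_lt_pow₀ ((one_lt_div hL).2 hlt) two_ne_zero
  simp only [calT, if_pos hlt] at hτT
  obtain ⟨c, ⟨hc, -⟩, hτc⟩ := exists_mem_Ioo_lt_of_continuousAt hL.ne' hk.ne'
    Real.continuous_arctan.continuousAt hτT one_lt_two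
  have hsqrt : 1 < √c := (Real.lt_sqrt zero_le_one).2 (by rwa [one_pow])
  obtain ⟨lam, hlam⟩ := exists_Ttilde_eq_of_lt_mul_sqrt hL.le hgam.le
    (hlt.trans (lt_mul_of_one_lt_right hgam hsqrt)) hτ hτc
  exact ⟨c, lam, hc, hlam⟩

lemma exists_Ttilde_eq_of_eq (hL : 0 < L) (hτ : 0 < τ) (hτT : τ < calT L L) :
    ∃ c lam, 1 < c ∧ 0 < lam ∧ lam < 1 ∧ Ttilde c lam L L = τ := by
  simp only [calT, lt_irrefl, if_false, if_true] at hτT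
  obtain ⟨r, hr, hLτ⟩ := exists_pos_lt_arctan_div ((lt_div_iff₀' hL).1 hτT)
  have hc : 1 < 1 + r ^ 2 := by nlinarith
  have hsqrt : √|(L / L) ^ 2 - (1 + r ^ 2)| = r := by
    rw [div_self hL.ne', one_pow, sub_add_cancel_left, abs_neg, abs_sq, Real.sqrt_sq hr.le]
  have hτr : τ < 1 / (L * r) * Real.arctan r := by
    rw [one_div_mul_eq_div, lt_div_iff₀ (mul_pos hL hr)]
    calc τ * (L * r) = L * τ * r := by ring
      _ < Real.arctan r := (lt_div_iff₀ hr).1 hLτ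
  obtain ⟨lam, hlam⟩ := exists_Ttilde_eq_of_lt_mul_sqrt hL.le hL.le
    (lt_mul_of_one_lt_right hL ((Real.lt_sqrt zero_le_one).2 (by rwa [one_pow]))) hτ
    (by rwa [hsqrt])
  exact ⟨1 + r ^ 2, lam, hc, hlam⟩

lemma exists_Ttilde_eq_of_gt (hL : 0 < L) (hgam : 0 < gam) (hgt : gam < L) (hτ : 0 < τ)
    (hτT : τ < calT gam L) :
    ∃ c lam, 1 < c ∧ 0 < lam ∧ lam < 1 ∧ Ttilde c lam L gam = τ := by
  simp only [calT, if_neg (not_lt.2 hgt.le), if_neg hgt.ne] at hτT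
  set k := (gam / L) ^ 2
  have hk0 : 0 < k := by positivity
  have hk1 : k < 1 := pow_lt_one₀ (div_nonneg hgam.le hL.le) ((div_lt_one hL).2 hgt) two_ne_zero
  have hr : √|k - 1| < 1 := by
    rw [Real.sqrt_lt' one_pos, one_pow]
    exact abs_sub_lt_iff.2 ⟨by linarith, by linarith⟩
  have hb : 1 < min (1 + k) ((L / gam) ^ 2) :=
    lt_min (by linarith) (one_lt_pow₀ ((one_lt_div hgam).2 hgt) two_ne_zero)
  obtain ⟨c, ⟨hc, hcb⟩, hτc⟩ := exists_mem_Ioo_lt_of_continuousAt hL.ne' hk1.ne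
    (continuousOn_artanh.continuousAt (Ioo_mem_nhds (by linarith [Real.sqrt_nonneg |k - 1|]) hr))
    hτT hb
  have hbranch : gam * √c < L := by
    rw [← lt_div_iff₀' hgam, Real.sqrt_lt' (div_pos hL hgam)]
    exact hcb.trans_le (min_le_right _ _)
  have hrc : √|k - c| < 1 := by
    rw [Real.sqrt_lt' one_pos, one_pow]
    exact abs_sub_lt_iff.2 ⟨by linarith, by linarith [min_le_left (1 + k) ((L / gam) ^ 2)]⟩
  obtain ⟨lam, hlam⟩ := exists_Ttilde_eq_of_mul_sqrt_lt hL.le hgam.le (by linarith) hbranch hrc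
    hτ hτc
  exact ⟨c, lam, hc, hlam⟩

end branches

/-- Every sampling period `τ` with `0 < τ < 𝒯(γ, L)` is attained:
there exist `c > 1` and `λ ∈ (0,1)` with `T̃(c,λ,L,γ) = τ`. -/
theorem Ttilde_attains (L gam : ℝ) (hL : 0 < L) (hgam : 0 < gam) :
    ∀ τ : ℝ, 0 < τ → τ < calT gam L →
      ∃ c lam : ℝ, 1 < c ∧ 0 < lam ∧ lam < 1 ∧ Ttilde c lam L gam = τ := by
  intro τ hτ hτT
  rcases lt_trichotomy L gam with hlt | rfl | hgt
  · exact exists_Ttilde_eq_of_lt hL hlt hτ hτT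
  · exact exists_Ttilde_eq_of_eq hL hτ hτT
  · exact exists_Ttilde_eq_of_gt hL hgam hgt hτ hτT
end

section
/- Let γ, L > 0, c > 1, λ ∈ (0,1), and ε > 0. Then for all real numbers h ≥ 0, W ≥ 0, s ≥ 0 and all φ with λ ≤ φ ≤ λ⁻¹, the following inequality holds: −h² + γ²W² + 2γφW(LW + h + s) − γ(2Lφ + γ(φ² + c))W² ≤ −(c − 1 − ε)γ²W² + (1/(λ²ε))·s². -/
/-!
Completing the square in `h - γφW` leaves `-(h - γφW)² - (c - 1)γ²W² + 2γφWs`; dropping the square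
and splitting the cross term by Young's inequality `2(γW)(φs) ≤ εγ²W² + φ²s²/ε`, the bound follows
from `φ² ≤ λ⁻²`.
-/

lemma dissipation_le_cross_term (gam L c h W s φ : ℝ) :
    -h ^ 2 + gam ^ 2 * W ^ 2 + 2 * gam * φ * W * (L * W + h + s)
        - gam * (2 * L * φ + gam * (φ ^ 2 + c)) * W ^ 2
      ≤ -(c - 1) * gam ^ 2 * W ^ 2 + 2 * (gam * W) * (φ * s) := by
  have hsquare : -h ^ 2 + gam ^ 2 * W ^ 2 + 2 * gam * φ * W * (L * W + h + s)
        - gam * (2 * L * φ + gam * (φ ^ 2 + c)) * W ^ 2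
      = -(h - gam * φ * W) ^ 2 + (-(c - 1) * gam ^ 2 * W ^ 2 + 2 * (gam * W) * (φ * s)) := by
    ring
  rw [hsquare]
  linarith [sq_nonneg (h - gam * φ * W)]

lemma sq_le_inv_sq_of_le_of_le_inv {lam φ : ℝ} (hlam : 0 < lam) (hφl : lam ≤ φ)
    (hφu : φ ≤ lam⁻¹) : φ ^ 2 ≤ (lam ^ 2)⁻¹ := by
  rw [← inv_pow]
  exact pow_le_pow_left₀ (hlam.le.trans hφl) hφu 2

lemma two_mul_mul_le_of_sq_le_inv_sq {lam ε φ : ℝ} (hε : 0 < ε) (hφ : φ ^ 2 ≤ (lam ^ 2)⁻¹)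
    (a s : ℝ) : 2 * a * (φ * s) ≤ ε * a ^ 2 + (1 / (lam ^ 2 * ε)) * s ^ 2 := by
  have hyoung := two_mul_le_add_mul_sq (a := a) (b := φ * s) hε
  have hweight : ε⁻¹ * (φ * s) ^ 2 ≤ (1 / (lam ^ 2 * ε)) * s ^ 2 := by
    rw [mul_pow, one_div, mul_inv, mul_comm (lam ^ 2)⁻¹, mul_assoc]
    gcongr
  linarith

theorem sampled_data_pointwise_estimate_general (gam L c lam ε h W s φ : ℝ)
    (hlam0 : 0 < lam)
    (hε : 0 < ε)
    (hφl : lam ≤ φ) (hφu : φ ≤ lam⁻¹) :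
    -h ^ 2 + gam ^ 2 * W ^ 2 + 2 * gam * φ * W * (L * W + h + s)
        - gam * (2 * L * φ + gam * (φ ^ 2 + c)) * W ^ 2
      ≤ -(c - 1 - ε) * gam ^ 2 * W ^ 2 + (1 / (lam ^ 2 * ε)) * s ^ 2 := by
  have hdiss := dissipation_le_cross_term gam L c h W s φ
  have hcross := two_mul_mul_le_of_sq_le_inv_sq hε
    (sq_le_inv_sq_of_le_of_le_inv hlam0 hφl hφu) (gam * W) s
  linarith

/-- The key pointwise estimate in the dissipativity analysis of the sampled-data Lyapunov
function `U(ξ) = V(x) + γ φ(τ) W(e)²`:  for `γ, L > 0`, `c > 1`, `λ ∈ (0,1)`, `ε > 0`,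
all `h, W, s ≥ 0` and all `φ ∈ [λ, λ⁻¹]`,
`-h² + γ²W² + 2γφW(LW + h + s) - γ(2Lφ + γ(φ² + c))W² ≤ -(c - 1 - ε)γ²W² + s²/(λ²ε)`. -/
theorem sampled_data_pointwise_estimate (gam L c lam ε h W s φ : ℝ)
    (hgam : 0 < gam) (hL : 0 < L) (hc : 1 < c) (hlam0 : 0 < lam) (hlam1 : lam < 1)
    (hε : 0 < ε) (hh : 0 ≤ h) (hW : 0 ≤ W) (hs : 0 ≤ s)
    (hφl : lam ≤ φ) (hφu : φ ≤ lam⁻¹) :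
    -h ^ 2 + gam ^ 2 * W ^ 2 + 2 * gam * φ * W * (L * W + h + s)
        - gam * (2 * L * φ + gam * (φ ^ 2 + c)) * W ^ 2
      ≤ -(c - 1 - ε) * gam ^ 2 * W ^ 2 + (1 / (lam ^ 2 * ε)) * s ^ 2 :=
  sampled_data_pointwise_estimate_general gam L c lam ε h W s φ hlam0 hε hφl hφu
end

section
/- Let λ be a class-K function, let q : ℝ≥0 → (0, +∞) be a continuous function with q(s) = 1 for all s ∈ [0,1], let α₁ be a class-K∞ function, and set c := λ(1). Then there exists a class-K function θ such that c + θ(α₁(s)) ≥ λ(1/q(s)) for all s ≥ 0. -/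
/-!
Put `ψ s = λ (1 / q s) - λ 1`; it is continuous and vanishes on `[0, 1]`. Let `N r` be the
supremum of `max (ψ s) 0` over the sublevel set `{s ≥ 0 | α₁ s ≤ r}`, which is compact since
`α₁` is proper. Then `N` is finite, nondecreasing, zero for `r ≤ α₁ 1`, and `ψ s ≤ N (α₁ s)`.
Such an `N` is dominated by the class-K function `θ r = r + a⁻¹ ∫ t in r..r+a, N t` with
`a = α₁ 1`: the forward average of a monotone function is continuous, monotone, and lies above it.
-/

open Set Filter MeasureTheory intervalIntegral

noncomputable def forwardMean (N : ℝ → ℝ) (a r : ℝ) : ℝ :=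
  a⁻¹ * ∫ t in (0 : ℝ)..a, N (r + t)

section forwardMean

variable {N : ℝ → ℝ} {a : ℝ}

theorem Monotone.intervalIntegrable_comp_add (hN : Monotone N) (r u v : ℝ) :
    IntervalIntegrable (fun t => N (r + t)) volume u v :=
  (hN.comp fun _ _ h => by linarith).intervalIntegrable

theorem Monotone.monotone_forwardMean (hN : Monotone N) (ha : 0 ≤ a) :
    Monotone (forwardMean N a) :=
  fun r r' h => mul_le_mul_of_nonneg_left
    (integral_mono_on ha (hN.intervalIntegrable_comp_add r 0 a)
      (hN.intervalIntegrable_comp_add r' 0 a) fun t _ => hN (by linarith))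
    (inv_nonneg.2 ha)

theorem Monotone.le_forwardMean (hN : Monotone N) (ha : 0 < a) (r : ℝ) :
    N r ≤ forwardMean N a r := by
  rw [forwardMean, le_inv_mul_iff₀ ha]
  have := integral_mono_on ha.le intervalIntegrable_const (hN.intervalIntegrable_comp_add r 0 a)
    fun t ht => hN (le_add_of_nonneg_right ht.1)
  simpa [mul_comm] using this

theorem Monotone.continuous_forwardMean (hN : Monotone N) (a : ℝ) :
    Continuous (forwardMean N a) := by
  have hint : ∀ u v, IntervalIntegrable N volume u v := fun _ _ => hN.intervalIntegrable
  set F := fun x => ∫ t in (0 : ℝ)..x, N t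
  have hF : forwardMean N a = fun r => a⁻¹ * (F (r + a) - F r) := by
    ext r
    rw [forwardMean, integral_comp_add_left, add_zero,
      integral_interval_sub_left (hint _ _) (hint _ _)]
  have hFc : Continuous F := continuous_primitive hint 0
  rw [hF]
  exact continuous_const.mul ((hFc.comp (continuous_add_const a)).sub hFc)

theorem forwardMean_zero_of_eqOn (ha : 0 ≤ a) (hN : EqOn N 0 (Icc 0 a)) :
    forwardMean N a 0 = 0 := by
  have h0 : ∫ t in (0 : ℝ)..a, N (0 + t) = ∫ t in (0 : ℝ)..a, (0 : ℝ) :=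
    integral_congr fun t ht => by rw [zero_add, hN (uIcc_of_le ha ▸ ht), Pi.zero_apply]
  rw [forwardMean, h0, intervalIntegral.integral_zero, mul_zero]

theorem Monotone.exists_classK_ge (hN : Monotone N) (ha : 0 < a) (hNa : EqOn N 0 (Icc 0 a)) :
    ∃ θ : ℝ → ℝ, ClassK θ ∧ ∀ r ≥ (0 : ℝ), N r ≤ θ r := by
  have hN0 : ∀ r ≥ (0 : ℝ), 0 ≤ N r := fun r hr =>
    (hNa ⟨le_rfl, ha.le⟩).symm.le.trans (hN hr)
  have hle : ∀ r ≥ (0 : ℝ), N r ≤ r + forwardMean N a r := fun r hr =>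
    (hN.le_forwardMean ha r).trans (le_add_of_nonneg_left hr)
  refine ⟨fun r => r + forwardMean N a r, ⟨⟨?_, ?_, fun r hr => ?_⟩, ?_⟩, hle⟩
  · exact (continuous_id.add (hN.continuous_forwardMean a)).continuousOn
  · simp [forwardMean_zero_of_eqOn ha.le hNa]
  · exact add_pos_of_pos_of_nonneg hr ((hN0 r hr.le).trans (hN.le_forwardMean ha r))
  · exact (strictMono_id.add_monotone (hN.monotone_forwardMean ha.le)).strictMonoOn _

end forwardMean

noncomputable def sublevelSup (ψ α : ℝ → ℝ) (r : ℝ) : ℝ :=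
  sSup (insert 0 (ψ '' {s | 0 ≤ s ∧ α s ≤ r}))

section sublevelSup

variable {ψ α : ℝ → ℝ}

theorem bddAbove_image_sublevel (hψ : ContinuousOn ψ (Ici 0)) (hα : Tendsto α atTop atTop)
    (r : ℝ) : BddAbove (ψ '' {s | 0 ≤ s ∧ α s ≤ r}) := by
  obtain ⟨M, hM⟩ := (hα.eventually_gt_atTop r).exists_forall_of_atTop
  refine ((isCompact_Icc (a := 0) (b := M)).image_of_continuousOn
    (hψ.mono fun _ hs => hs.1)).bddAbove.mono (image_mono ?_)
  exact fun s ⟨hs0, hsr⟩ => ⟨hs0, le_of_not_ge fun hMs => (hM s hMs).not_ge hsr⟩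

theorem monotone_sublevelSup (hψ : ContinuousOn ψ (Ici 0)) (hα : Tendsto α atTop atTop) :
    Monotone (sublevelSup ψ α) := fun _ r' h =>
  csSup_le_csSup ((bddAbove_image_sublevel hψ hα r').insert 0) (insert_nonempty _ _)
    (insert_subset_insert (image_mono fun _ hs => ⟨hs.1, hs.2.trans h⟩))

theorem le_sublevelSup (hψ : ContinuousOn ψ (Ici 0)) (hα : Tendsto α atTop atTop) {s : ℝ}
    (hs : 0 ≤ s) : ψ s ≤ sublevelSup ψ α (α s) :=
  le_csSup ((bddAbove_image_sublevel hψ hα _).insert 0) (Or.inr ⟨s, ⟨hs, le_rfl⟩, rfl⟩)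

theorem sublevelSup_eq_zero (hα : StrictMonoOn α (Ici 0)) {b r : ℝ} (hb : 0 ≤ b)
    (hψb : ∀ s ∈ Icc 0 b, ψ s ≤ 0) (hr : r ≤ α b) : sublevelSup ψ α r = 0 := by
  refine IsGreatest.csSup_eq ⟨mem_insert _ _, ?_⟩
  rintro _ (rfl | ⟨s, ⟨hs0, hsr⟩, rfl⟩)
  · exact le_rfl
  · exact hψb s ⟨hs0, (hα.le_iff_le hs0 hb).1 (hsr.trans hr)⟩

end sublevelSup

theorem exists_classK_comp_ge {ψ α : ℝ → ℝ} (hψ : ContinuousOn ψ (Ici 0)) {b : ℝ} (hb : 0 < b)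
    (hψb : ∀ s ∈ Icc 0 b, ψ s ≤ 0) (hα : ClassKInf α) :
    ∃ θ : ℝ → ℝ, ClassK θ ∧ ∀ s ≥ (0 : ℝ), ψ s ≤ θ (α s) := by
  obtain ⟨⟨⟨-, hα0, hαpos⟩, hαmono⟩, hαtop⟩ := hα
  obtain ⟨θ, hθ, hNθ⟩ := (monotone_sublevelSup hψ hαtop).exists_classK_ge (hαpos b hb)
    fun r hr => sublevelSup_eq_zero hαmono hb.le hψb hr.2
  refine ⟨θ, hθ, fun s hs => (le_sublevelSup hψ hαtop hs).trans (hNθ _ ?_)⟩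
  exact hα0 ▸ hαmono.monotoneOn (mem_Ici.2 le_rfl) hs hs

/-- The domination claim (eq. (99) of the paper): for a class-K function `λ`, a continuous
positive function `q` with `q ≡ 1` on `[0,1]`, a class-K∞ function `α₁`, and `c := λ(1)`,
there exists a class-K function `θ` with `c + θ(α₁ s) ≥ λ(1 / q s)` for all `s ≥ 0`. -/
theorem domination_theta (lam q α₁ : ℝ → ℝ)
    (hlam : ClassK lam)
    (hq : ContinuousOn q (Set.Ici 0)) (hqpos : ∀ s ≥ (0:ℝ), 0 < q s)
    (hq1 : ∀ s ∈ Set.Icc (0:ℝ) 1, q s = 1)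
    (hα₁ : ClassKInf α₁) :
    ∃ θ : ℝ → ℝ, ClassK θ ∧ ∀ s ≥ (0:ℝ), lam (1 / q s) ≤ lam 1 + θ (α₁ s) := by
  have hψ : ContinuousOn (fun s => lam (1 / q s) - lam 1) (Ici 0) :=
    (hlam.1.1.comp (continuousOn_const.div hq fun s hs => (hqpos s hs).ne')
      fun s hs => (one_div_pos.2 (hqpos s hs)).le).sub continuousOn_const
  obtain ⟨θ, hθ, hψθ⟩ := exists_classK_comp_ge hψ one_pos
    (fun s hs => by rw [hq1 s hs, div_one, sub_self]) hα₁
  exact ⟨θ, hθ, fun s hs => by linarith [hψθ s hs]⟩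
end
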